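/- arXiv:1703.05296 — 3 statements merged into one kernel-verified Lean document; each statement's English description precedes it below -/
import Mathlib

section
/- Set ξ := t·x·α·t. Then for every element a of R one has the intertwining identity (D + x)·(α·t·a·t·β) − (α·t·a·t·β)·(D + x) = α·t·((D·a − a·D) + (ξ·a − a·ξ))·t·β. (Thus the map a ↦ α·a·β carries the transferred differential D + ξ on the corner t·R·t to the perturbed differential D + x on the corner (α·t·β)·R·(α·t·β).) -/
/-!
With `u = 1 + s x`, the Maurer–Cartan equation and `D s + s D = 1 - t` give
`u (D + x) - (D + x) u = t x - (1 + x s) x`, hence `(D + x) α - α (D + x) = α t x α - α x`.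
Multiplying on the right by the idempotent `t`, which commutes with `D`, yields
`(D + x) α t = α t (D + ξ)`. The mirror identity `t β (D + x) = (D + ξ) t β` is the same statement
in the opposite ring, combined with the push-through identity `x α = β x`, and the intertwining
identity is the difference of the two.
-/

open MulOpposite

section
variable {R : Type*} [Ring R]

theorem isUnit_one_add_mul_comm {a b : R} (h : IsUnit (1 + a * b)) : IsUnit (1 + b * a) := by
  refine ⟨⟨1 + b * a, 1 - b * Ring.inverse (1 + a * b) * a, ?_, ?_⟩, rfl⟩
  · calc (1 + b * a) * (1 - b * Ring.inverse (1 + a * b) * a)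
        = 1 + b * (1 - (1 + a * b) * Ring.inverse (1 + a * b)) * a := by noncomm_ring
      _ = 1 := by rw [Ring.mul_inverse_cancel _ h, sub_self, mul_zero, zero_mul, add_zero]
  · calc (1 - b * Ring.inverse (1 + a * b) * a) * (1 + b * a)
        = 1 + b * (1 - Ring.inverse (1 + a * b) * (1 + a * b)) * a := by noncomm_ring
      _ = 1 := by rw [Ring.inverse_mul_cancel _ h, sub_self, mul_zero, zero_mul, add_zero]

theorem mul_inverse_one_add_mul_comm {a b : R} (h : IsUnit (1 + a * b)) :
    b * Ring.inverse (1 + a * b) = Ring.inverse (1 + b * a) * b := by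
  have h' := isUnit_one_add_mul_comm h
  calc b * Ring.inverse (1 + a * b)
      = Ring.inverse (1 + b * a) * ((1 + b * a) * b) * Ring.inverse (1 + a * b) := by
        rw [← mul_assoc, Ring.inverse_mul_cancel _ h', one_mul]
    _ = Ring.inverse (1 + b * a) * b * ((1 + a * b) * Ring.inverse (1 + a * b)) := by
        noncomm_ring
    _ = Ring.inverse (1 + b * a) * b := by rw [Ring.mul_inverse_cancel _ h, mul_one]

theorem mul_inv_sub_inv_mul {d u α : R} (hαu : α * u = 1) (huα : u * α = 1) :
    d * α - α * d = α * (u * d - d * u) * α := by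
  calc d * α - α * d = (α * u) * d * α - α * d * (u * α) := by rw [hαu, huα, one_mul, mul_one]
    _ = α * (u * d - d * u) * α := by noncomm_ring

theorem add_mul_inverse_mul_corner {s t x D α : R} (hDD : D * D = 0)
    (hMC : (D + x) * (D + x) = 0) (hDs : D * s + s * D = 1 - t) (hDt : D * t = t * D)
    (htt : t * t = t) (hαu : α * (1 + s * x) = 1) (huα : (1 + s * x) * α = 1) :
    (D + x) * α * t = α * t * (D + t * x * α * t) := by
  have hcomm : (1 + s * x) * (D + x) - (D + x) * (1 + s * x) = t * x - (1 + x * s) * x := by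
    linear_combination (norm := noncomm_ring) s * hMC - s * hDD - hDs * x
  have hpush : (1 + x * s) * x * α = x := by
    rw [show (1 + x * s) * x = x * (1 + s * x) by noncomm_ring, mul_assoc, huα, mul_one]
  have hα : (D + x) * α - α * (D + x) = α * t * x * α - α * x := by
    rw [mul_inv_sub_inv_mul hαu huα, hcomm]
    calc α * (t * x - (1 + x * s) * x) * α = α * t * x * α - α * ((1 + x * s) * x * α) := by
          noncomm_ring
      _ = α * t * x * α - α * x := by rw [hpush]
  linear_combination (norm := noncomm_ring) hα * t + α * hDt - α * htt * x * α * t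

theorem corner_inverse_mul_add {s t x D β : R} (hDD : D * D = 0)
    (hMC : (D + x) * (D + x) = 0) (hDs : D * s + s * D = 1 - t) (hDt : D * t = t * D)
    (htt : t * t = t) (hβv : β * (1 + x * s) = 1) (hvβ : (1 + x * s) * β = 1) :
    t * β * (D + x) = (D + t * β * x * t) * t * β := by
  have h := add_mul_inverse_mul_corner (R := Rᵐᵒᵖ) (s := op s) (t := op t) (x := op x)
    (D := op D) (α := op β) (by rw [← op_mul, hDD, op_zero])
    (by rw [← op_add, ← op_mul, hMC, op_zero])
    (by rw [← op_mul, ← op_mul, ← op_add, add_comm, hDs, op_sub, op_one])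
    (by rw [← op_mul, ← op_mul, hDt]) (by rw [← op_mul, htt])
    (by rw [← op_mul, ← op_one, ← op_add, ← op_mul, hvβ])
    (by rw [← op_mul, ← op_one, ← op_add, ← op_mul, hβv])
  apply_fun unop at h
  simpa only [unop_mul, unop_add, unop_op, mul_assoc] using h

end

theorem corner_intertwining_general {R : Type*} [Ring R] (s t x D : R)
    (htt : t * t = t)
    (hu : IsUnit (1 + s * x))
    (hDD : D * D = 0) (hDs : D * s + s * D = 1 - t) (hDt : D * t = t * D)
    (hMC : (D + x) * (D + x) = 0) :
    let α := Ring.inverse (1 + s * x)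
    let β := Ring.inverse (1 + x * s)
    let ξ := t * x * α * t
    ∀ a : R,
      (D + x) * (α * t * a * t * β) - (α * t * a * t * β) * (D + x) =
        α * t * ((D * a - a * D) + (ξ * a - a * ξ)) * t * β := by
  intro α β ξ a
  have hv := isUnit_one_add_mul_comm hu
  have hleft : (D + x) * α * t = α * t * (D + ξ) :=
    add_mul_inverse_mul_corner hDD hMC hDs hDt htt
      (Ring.inverse_mul_cancel _ hu) (Ring.mul_inverse_cancel _ hu)
  have hright : t * β * (D + x) = (D + ξ) * t * β := by
    rw [corner_inverse_mul_add hDD hMC hDs hDt htt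
      (Ring.inverse_mul_cancel _ hv) (Ring.mul_inverse_cancel _ hv),
      mul_assoc t β, ← mul_inverse_one_add_mul_comm hu, ← mul_assoc]
  linear_combination (norm := noncomm_ring) hleft * a * t * β - α * t * a * hright

/-- The map `a ↦ α a β` intertwines the transferred differential `D + ξ` on the
corner `tRt` with the perturbed differential `D + x` on the corner `(αtβ)R(αtβ)`. -/
theorem corner_intertwining {R : Type*} [Ring R] (s t x D : R)
    (hss : s * s = 0) (hst : s * t = 0) (hts : t * s = 0) (htt : t * t = t)
    (hu : IsUnit (1 + s * x))
    (hDD : D * D = 0) (hDs : D * s + s * D = 1 - t) (hDt : D * t = t * D)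
    (hMC : (D + x) * (D + x) = 0) :
    let α := Ring.inverse (1 + s * x)
    let β := Ring.inverse (1 + x * s)
    let ξ := t * x * α * t
    ∀ a : R,
      (D + x) * (α * t * a * t * β) - (α * t * a * t * β) * (D + x) =
        α * t * ((D * a - a * D) + (ξ * a - a * ξ)) * t * β :=
  corner_intertwining_general s t x D htt hu hDD hDs hDt hMC
end

section
/- Set g := (1 + t − α·t)·β. Then g is a unit of R with inverse g⁻¹ = β⁻¹·(1 − t + α·t), where β⁻¹ = 1 + x·s; in particular (1 − t + α·t)·(1 + t − α·t) = 1 = (1 + t − α·t)·(1 − t + α·t). Moreover the following identities hold: (α·t·β)·g·(α·t·β) = α·t·β, t·g = t·β, and g⁻¹·t = α·t. -/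
/-!
Right multiplication by `α = (1 + s x)⁻¹` fixes every `a` with `a s = 0` (as then `a (1 + s x) = a`),
so `t α = t` and `s α = s`; likewise `β t = t` because `s t = 0`. Hence `p = t` and `q = α t` satisfy
`p q = p` and `q p = q`, which makes `1 - p + q` and `1 + p - q` mutually inverse, and `g` is a
product of units. The remaining identities follow from `g⁻¹ t = α t`, i.e. `g (α t) = t`.
-/

/-- Jacobson's lemma. -/
theorem IsUnit.one_add_mul_swap {R : Type*} [Ring R] {a b : R} (h : IsUnit (1 + a * b)) :
    IsUnit (1 + b * a) := by
  set u := Ring.inverse (1 + a * b)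
  refine ⟨⟨1 + b * a, 1 - b * u * a, ?_, ?_⟩, rfl⟩
  · calc (1 + b * a) * (1 - b * u * a) = 1 + b * a - b * ((1 + a * b) * u) * a := by noncomm_ring
      _ = 1 := by rw [Ring.mul_inverse_cancel _ h]; noncomm_ring
  · calc (1 - b * u * a) * (1 + b * a) = 1 + b * a - b * (u * (1 + a * b)) * a := by noncomm_ring
      _ = 1 := by rw [Ring.inverse_mul_cancel _ h]; noncomm_ring

namespace Ring

variable {M₀ : Type*} [MonoidWithZero M₀] {u a : M₀}

theorem mul_inverse_eq_self (hu : IsUnit u) (h : a * u = a) : a * inverse u = a := by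
  calc a * inverse u = a * u * inverse u := by rw [h]
    _ = a := mul_inverse_cancel_right u a hu

theorem inverse_mul_eq_self (hu : IsUnit u) (h : u * a = a) : inverse u * a = a := by
  calc inverse u * a = inverse u * (u * a) := by rw [h]
    _ = a := inverse_mul_cancel_left u a hu

end Ring

theorem one_sub_add_mul_one_add_sub {R : Type*} [Ring R] {p q : R} (hpq : p * q = p)
    (hqp : q * p = q) : (1 - p + q) * (1 + p - q) = 1 := by
  have hpp : p * p = p := by
    calc p * p = p * q * p := by rw [hpq]
      _ = p := by rw [mul_assoc, hqp, hpq]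
  have hqq : q * q = q := by
    calc q * q = q * p * q := by rw [hqp]
      _ = q := by rw [mul_assoc, hpq, hqp]
  calc (1 - p + q) * (1 + p - q) = 1 - p * p + p * q + q * p - q * q := by noncomm_ring
    _ = 1 := by rw [hpp, hqq, hpq, hqp]; abel

/-- `g := (1 + t - αt)β` is a unit with inverse `g⁻¹ = β⁻¹ (1 - t + αt)` where
`β⁻¹ = 1 + xs`; in particular `(1 - t + αt)(1 + t - αt) = 1 = (1 + t - αt)(1 - t + αt)`.
Moreover `(αtβ) g (αtβ) = αtβ`, `t g = t β` and `g⁻¹ t = α t`. -/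
theorem g_invertible_identities {R : Type*} [Ring R] (s t x : R)
    (hss : s * s = 0) (hst : s * t = 0) (hts : t * s = 0) (htt : t * t = t)
    (hu : IsUnit (1 + s * x)) :
    let α := Ring.inverse (1 + s * x)
    let β := Ring.inverse (1 + x * s)
    let g := (1 + t - α * t) * β
    let ginv := (1 + x * s) * (1 - t + α * t)
    IsUnit g ∧ g * ginv = 1 ∧ ginv * g = 1 ∧
      (1 - t + α * t) * (1 + t - α * t) = 1 ∧
      (1 + t - α * t) * (1 - t + α * t) = 1 ∧
      (α * t * β) * g * (α * t * β) = α * t * β ∧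
      t * g = t * β ∧ ginv * t = α * t := by
  intro α β g ginv
  have hu' : IsUnit (1 + x * s) := hu.one_add_mul_swap
  have htα : t * α = t := Ring.mul_inverse_eq_self hu (by rw [mul_add, ← mul_assoc, hts]; simp)
  have hsα : s * α = s := Ring.mul_inverse_eq_self hu (by rw [mul_add, ← mul_assoc, hss]; simp)
  have hβt : β * t = t := Ring.inverse_mul_eq_self hu' (by rw [add_mul, mul_assoc, hst]; simp)
  have ht_αt : t * (α * t) = t := by rw [← mul_assoc, htα, htt]
  have hαt_t : α * t * t = α * t := by rw [mul_assoc, htt]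
  have key₁ : (1 - t + α * t) * (1 + t - α * t) = 1 := one_sub_add_mul_one_add_sub ht_αt hαt_t
  have key₂ : (1 + t - α * t) * (1 - t + α * t) = 1 := by
    convert one_sub_add_mul_one_add_sub hαt_t ht_αt using 2 <;> abel
  have hg_ginv : g * ginv = 1 := by
    calc g * ginv = (1 + t - α * t) * (β * (1 + x * s)) * (1 - t + α * t) := by
          simp only [g, ginv, mul_assoc]
      _ = 1 := by rw [Ring.inverse_mul_cancel _ hu', mul_one, key₂]
  have hginv_g : ginv * g = 1 := by
    calc ginv * g = (1 + x * s) * ((1 - t + α * t) * (1 + t - α * t)) * β := by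
          simp only [g, ginv, mul_assoc]
      _ = 1 := by rw [key₁, mul_one, Ring.mul_inverse_cancel _ hu']
  have ht_g : t * g = t * β := by
    calc t * g = (t + t * t - t * (α * t)) * β := by simp only [g]; noncomm_ring
      _ = t * β := by rw [htt, ht_αt, add_sub_cancel_right]
  have hginv_t : ginv * t = α * t := by
    calc ginv * t = (1 + x * s) * (t - t * t + α * t * t) := by simp only [ginv]; noncomm_ring
      _ = α * t + x * (s * α * t) := by rw [htt, hαt_t, sub_self, zero_add]; noncomm_ring
      _ = α * t := by rw [hsα, hst, mul_zero, add_zero]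
  have hg_αt : g * (α * t) = t := by rw [← hginv_t, ← mul_assoc, hg_ginv, one_mul]
  refine ⟨⟨⟨g, ginv, hg_ginv, hginv_g⟩, rfl⟩, hg_ginv, hginv_g, key₁, key₂, ?_, ht_g, hginv_t⟩
  calc α * t * β * g * (α * t * β) = α * (t * (β * (g * (α * t)))) * β := by simp only [mul_assoc]
    _ = α * t * β := by rw [hg_αt, hβt, htt, mul_assoc]
end

section
/- (Homological Perturbation Lemma, module form.) The endomorphisms s' := α ∘ s and t' := α ∘ t ∘ β together with the perturbed differential d + x again form an abstract Hodge decomposition of V: s' ∘ s' = 0, s' ∘ t' = 0, t' ∘ s' = 0, t' ∘ t' = t', (d + x) ∘ t' = t' ∘ (d + x), and (d + x) ∘ s' + s' ∘ (d + x) = id − t'. -/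
/-!
Conjugating by the units `1 + s x` and `1 + x s` clears the inverses from the perturbed
homotopy identity, which becomes `(1 + s x)(d + x)s + s(d + x)(1 + x s) = (1 + s x)(1 + x s) - t`,
a consequence of `ds + sd = 1 - t` and `d² = (d + x)² = 0`. The other identities are formal:
for a square-zero differential, `s² = 0`, `t s = 0` and `ds + sd = 1 - t` already force the
remaining ones, and `s² = 0` with `(1 + s x)⁻¹ s = s (1 + x s)⁻¹` gives `s'² = 0` and `t' s' = 0`.
-/

section HodgeDecomposition

variable {A : Type*} [Ring A]

structure IsHodgeDecomposition (d s t : A) : Prop where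
  s_mul_s : s * s = 0
  s_mul_t : s * t = 0
  t_mul_s : t * s = 0
  t_mul_t : t * t = t
  commute : Commute d t
  homotopy : d * s + s * d = 1 - t

theorem IsHodgeDecomposition.of_homotopy {d s t : A} (hdd : d * d = 0) (hss : s * s = 0)
    (hts : t * s = 0) (hds : d * s + s * d = 1 - t) : IsHodgeDecomposition d s t := by
  have hst : s * t = 0 := by
    linear_combination (norm := noncomm_ring) s * hds - hds * s - hss * d + d * hss + hts
  have hdt : d * t = t * d := by
    linear_combination (norm := noncomm_ring) d * hds - hds * d - hdd * s + s * hdd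
  have htt : t * t = t := by
    linear_combination (norm := noncomm_ring) hds * t - d * hst - s * hdt - hst * d
  exact ⟨hss, hst, hts, htt, hdt, hds⟩

section OneAddMul

variable {a b : A}

theorem isUnit_one_add_mul_swap (h : IsUnit (1 + a * b)) : IsUnit (1 + b * a) := by
  have h₁ := Ring.inverse_mul_cancel _ h
  have h₂ := Ring.mul_inverse_cancel _ h
  refine isUnit_iff_exists.mpr ⟨1 - b * Ring.inverse (1 + a * b) * a, ?_, ?_⟩
  · linear_combination (norm := noncomm_ring) -b * h₂ * a
  · linear_combination (norm := noncomm_ring) -b * h₁ * a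

theorem inverse_one_add_mul_mul (h : IsUnit (1 + a * b)) :
    Ring.inverse (1 + a * b) * a = a * Ring.inverse (1 + b * a) := by
  linear_combination (norm := noncomm_ring)
    Ring.inverse_mul_cancel _ h * a * Ring.inverse (1 + b * a)
      - Ring.inverse (1 + a * b) * a * Ring.mul_inverse_cancel _ (isUnit_one_add_mul_swap h)

theorem mul_inverse_one_add_mul_of_mul_self_eq_zero (h : IsUnit (1 + a * b)) (ha : a * a = 0) :
    a * Ring.inverse (1 + a * b) = a := by
  linear_combination (norm := noncomm_ring)
    a * Ring.mul_inverse_cancel _ h - ha * b * Ring.inverse (1 + a * b)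

theorem inverse_one_add_mul_mul_of_mul_self_eq_zero (h : IsUnit (1 + b * a)) (ha : a * a = 0) :
    Ring.inverse (1 + b * a) * a = a := by
  linear_combination (norm := noncomm_ring)
    Ring.inverse_mul_cancel _ h * a - Ring.inverse (1 + b * a) * b * ha

end OneAddMul

theorem one_add_mul_conj_homotopy {d s t x : A} (hdd : d * d = 0)
    (hds : d * s + s * d = 1 - t) (hx : (d + x) * (d + x) = 0) :
    (1 + s * x) * (d + x) * s + s * (d + x) * (1 + x * s) = (1 + s * x) * (1 + x * s) - t := by
  linear_combination (norm := noncomm_ring) hds + s * hx * s - s * hdd * s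

theorem IsHodgeDecomposition.perturb {d s t x : A} (h : IsHodgeDecomposition d s t)
    (hdd : d * d = 0) (hx : (d + x) * (d + x) = 0) (hu : IsUnit (1 + s * x)) :
    IsHodgeDecomposition (d + x) (Ring.inverse (1 + s * x) * s)
      (Ring.inverse (1 + s * x) * t * Ring.inverse (1 + x * s)) := by
  set α := Ring.inverse (1 + s * x)
  set β := Ring.inverse (1 + x * s)
  have hα : α * (1 + s * x) = 1 := Ring.inverse_mul_cancel _ hu
  have hβ : (1 + x * s) * β = 1 := Ring.mul_inverse_cancel _ (isUnit_one_add_mul_swap hu)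
  have hαs : α * s = s * β := inverse_one_add_mul_mul hu
  have hsα : s * α = s := mul_inverse_one_add_mul_of_mul_self_eq_zero hu h.s_mul_s
  have hβs : β * s = s :=
    inverse_one_add_mul_mul_of_mul_self_eq_zero (isUnit_one_add_mul_swap hu) h.s_mul_s
  refine .of_homotopy hx ?_ ?_ ?_
  · calc α * s * (α * s) = α * (s * α) * s := by noncomm_ring
      _ = 0 := by rw [hsα, mul_assoc, h.s_mul_s, mul_zero]
  · calc α * t * β * (α * s) = α * (t * (β * s)) * β := by rw [hαs]; noncomm_ring
      _ = 0 := by rw [hβs, h.t_mul_s, mul_zero, zero_mul]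
  · calc (d + x) * (α * s) + α * s * (d + x)
        = α * ((1 + s * x) * (d + x) * s + s * (d + x) * (1 + x * s)) * β := by
          linear_combination (norm := noncomm_ring)
            (d + x) * hαs - hα * ((d + x) * s * β) - α * s * (d + x) * hβ
      _ = α * ((1 + s * x) * (1 + x * s) - t) * β := by
          rw [one_add_mul_conj_homotopy hdd h.homotopy hx]
      _ = 1 - α * t * β := by
          linear_combination (norm := noncomm_ring) hα * ((1 + x * s) * β) + hβ

end HodgeDecomposition

theorem HPL_module_general {R : Type*} [CommRing R] {V : Type*} [AddCommGroup V] [Module R V]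
    (d s t x : Module.End R V)
    (hdd : d * d = 0)
    (hss : s * s = 0) (hts : t * s = 0)
    (hds : d * s + s * d = 1 - t)
    (hx : (d + x) * (d + x) = 0)
    (hu : IsUnit (1 + s * x)) :
    let α := Ring.inverse (1 + s * x)
    let β := Ring.inverse (1 + x * s)
    let s' := α * s
    let t' := α * t * β
    s' * s' = 0 ∧ s' * t' = 0 ∧ t' * s' = 0 ∧ t' * t' = t' ∧
      (d + x) * t' = t' * (d + x) ∧
      (d + x) * s' + s' * (d + x) = 1 - t' := by
  intro α β s' t'
  have h := (IsHodgeDecomposition.of_homotopy hdd hss hts hds).perturb hdd hx hu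
  exact ⟨h.s_mul_s, h.s_mul_t, h.t_mul_s, h.t_mul_t, h.commute, h.homotopy⟩

/-- Homological Perturbation Lemma, module form: `s' := α ∘ s`, `t' := α ∘ t ∘ β`
together with the perturbed differential `d + x` again form an abstract Hodge
decomposition of `V`. -/
theorem HPL_module {R : Type*} [CommRing R] {V : Type*} [AddCommGroup V] [Module R V]
    (d s t x : Module.End R V)
    (hdd : d * d = 0)
    (hss : s * s = 0) (hst : s * t = 0) (hts : t * s = 0) (htt : t * t = t)
    (hds : d * s + s * d = 1 - t) (hdt : d * t = t * d)
    (hx : (d + x) * (d + x) = 0)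
    (hu : IsUnit (1 + s * x)) :
    let α := Ring.inverse (1 + s * x)
    let β := Ring.inverse (1 + x * s)
    let s' := α * s
    let t' := α * t * β
    s' * s' = 0 ∧ s' * t' = 0 ∧ t' * s' = 0 ∧ t' * t' = t' ∧
      (d + x) * t' = t' * (d + x) ∧
      (d + x) * s' + s' * (d + x) = 1 - t' :=
  HPL_module_general d s t x hdd hss hts hds hx hu
end
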